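/- arXiv:1907.03643 — 13 statements merged into one kernel-verified Lean document; each statement's English description precedes it below -/
import Mathlib

section
/- Let n, m ≥ 2 be positive integers and define a : ℕ → ℕ by a(1) = n and a(t+1) = a(t) + n - ⌊a(t)/m⌋. Then there exists t₀ such that a(t) = n·m for all t ≥ t₀. -/
/-!
The recursion is `a (t + 1) = f (a t)` with `f x = x + n - ⌊x / m⌋`. The value `n * m` is a fixed
point of `f`; below it `⌊x / m⌋ < n`, so `f` strictly increases `x`, and writing `x = m q + r`
gives `f x = (m - 1) q + r + n ≤ (m - 1)(n - 1) + (m - 1) + n = n m`, so `f` never overshoots.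
Starting from `n ≤ n m`, the orbit climbs by at least one per step and is trapped at `n m`
after at most `n m` steps.
-/

def fregeStep (n m x : ℕ) : ℕ := x + n - x / m

section fregeStep

variable {n m x : ℕ}

theorem fregeStep_mul_self (hm : 0 < m) : fregeStep n m (n * m) = n * m := by
  simp [fregeStep, Nat.mul_div_cancel _ hm]

theorem lt_fregeStep (hm : 0 < m) (hx : x < n * m) : x < fregeStep n m x := by
  have : x / m < n := (Nat.div_lt_iff_lt_mul hm).2 hx
  unfold fregeStep
  omega

theorem fregeStep_le (hm : 0 < m) (hx : x ≤ n * m) : fregeStep n m x ≤ n * m := by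
  rcases hx.eq_or_lt with rfl | hx
  · exact (fregeStep_mul_self hm).le
  obtain ⟨d, rfl⟩ : ∃ d, n = x / m + 1 + d :=
    Nat.exists_eq_add_of_le ((Nat.div_lt_iff_lt_mul hm).2 hx)
  have hdiv := Nat.div_add_mod x m
  have hmod := Nat.mod_lt x hm
  have hd : d ≤ d * m := Nat.le_mul_of_pos_right d hm
  rw [fregeStep, Nat.sub_le_iff_le_add]
  nlinarith

end fregeStep

theorem iterate_eq_of_lt_apply {f : ℕ → ℕ} {c : ℕ} (hfix : f c = c)
    (hle : ∀ x ≤ c, f x ≤ c) (hlt : ∀ x < c, x < f x) :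
    ∀ k x, x ≤ c → c - x ≤ k → f^[k] x = c := by
  intro k
  induction k with
  | zero =>
    intro x hx hk
    rw [Function.iterate_zero_apply]
    omega
  | succ k ih =>
    intro x hx hk
    rw [Function.iterate_succ_apply]
    rcases hx.eq_or_lt with rfl | hx
    · rw [hfix, Function.iterate_fixed hfix]
    · have hstep := hlt x hx
      exact ih _ (hle x hx.le) (by omega)

theorem eq_iterate_of_succ_eq_apply {a f : ℕ → ℕ} {s : ℕ}
    (h : ∀ t, s ≤ t → a (t + 1) = f (a t)) (k : ℕ) : a (s + k) = f^[k] (a s) := by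
  induction k with
  | zero => rfl
  | succ k ih =>
    rw [← add_assoc, h _ (Nat.le_add_right s k), ih, Function.iterate_succ_apply']

theorem frege_total_score_stabilizes_general (n m : ℕ) (hm : 2 ≤ m)
    (a : ℕ → ℕ) (ha1 : a 1 = n)
    (harec : ∀ t, 1 ≤ t → a (t + 1) = a t + n - a t / m) :
    ∃ t₀ : ℕ, ∀ t, t₀ ≤ t → a t = n * m := by
  have hm : 0 < m := by omega
  refine ⟨1 + n * m, fun t ht => ?_⟩
  obtain ⟨k, rfl⟩ := Nat.exists_eq_add_of_le (le_trans (Nat.le_add_right 1 _) ht)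
  rw [eq_iterate_of_succ_eq_apply (f := fregeStep n m) harec, ha1]
  exact iterate_eq_of_lt_apply (fregeStep_mul_self hm) (fun _ => fregeStep_le hm)
    (fun _ => lt_fregeStep hm) k n (Nat.le_mul_of_pos_right n hm) (by omega)

/-- Frege's total-score recursion eventually stabilizes at n·m. -/
theorem frege_total_score_stabilizes (n m : ℕ) (hn : 1 ≤ n) (hm : 2 ≤ m)
    (a : ℕ → ℕ) (ha1 : a 1 = n)
    (harec : ∀ t, 1 ≤ t → a (t + 1) = a t + n - a t / m) :
    ∃ t₀ : ℕ, ∀ t, t₀ ≤ t → a t = n * m :=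
  frege_total_score_stabilizes_general n m hm a ha1 harec
end

section
/- Let n, m ≥ 2 be positive integers and define a : ℕ → ℕ by a(1) = n and a(t+1) = a(t) + n - ⌊a(t)/m⌋. Then a(t) ≤ n·m for all t ≥ 1. -/
/-! Write `a = m q + r` with `r < m`. If `a ≤ n m` then `q ≤ n`, with `q < n` unless `a = n m`.
A step adds `n - q` to `a`, and when `q < n` the slack `n m - a = m (n - q) - r` is at least
`m (n - q) - (m - 1) ≥ n - q`, so the bound `n m` is an invariant. -/

theorem add_sub_div_le_mul_of_le_mul {a n m : ℕ} (hm : 0 < m) (ha : a ≤ n * m) :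
    a + n - a / m ≤ n * m := by
  obtain rfl | hlt := eq_or_lt_of_le ha
  · rw [Nat.mul_div_cancel n hm, Nat.add_sub_cancel]
  have hq : a / m + 1 ≤ n := (Nat.div_lt_iff_lt_mul hm).2 hlt
  have hr : a % m + 1 ≤ m := Nat.mod_lt a hm
  have hdecomp : m * (a / m) + a % m = a := Nat.div_add_mod a m
  suffices a + n ≤ n * m + a / m by omega
  nlinarith

theorem frege_total_score_bounded_general (n m : ℕ) (hm : 2 ≤ m)
    (a : ℕ → ℕ) (ha1 : a 1 = n)
    (harec : ∀ t, 1 ≤ t → a (t + 1) = a t + n - a t / m) :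
    ∀ t, 1 ≤ t → a t ≤ n * m := by
  intro t ht
  induction t, ht using Nat.le_induction with
  | base => rw [ha1]; exact Nat.le_mul_of_pos_right n (by omega)
  | succ t ht ih => rw [harec t ht]; exact add_sub_div_le_mul_of_le_mul (by omega) ih

/-- Frege's total-score recursion never exceeds n·m. -/
theorem frege_total_score_bounded (n m : ℕ) (hn : 1 ≤ n) (hm : 2 ≤ m)
    (a : ℕ → ℕ) (ha1 : a 1 = n)
    (harec : ∀ t, 1 ≤ t → a (t + 1) = a t + n - a t / m) :
    ∀ t, 1 ≤ t → a t ≤ n * m :=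
  frege_total_score_bounded_general n m hm a ha1 harec
end

section
/- In the modified Frege method with m ≥ 2 candidates, for every candidate j and every time t ≥ 1 it holds that s_j^t - p_j^t > -1. -/
open Finset

/-
Each round adds votes of total mass 1 and removes 1 from the winner, so the scores keep summing to
1, and the winner, having a maximal score, has a positive one. Since `s^{t+1} - p^{t+1} = s^t` for
a loser and `= s^t - 1` for the winner, an induction gives `s^{t+1} - p^{t+1} > -1`: a loser's score
exceeds `p^t - 1 ≥ -1` by the induction hypothesis, and the winner's exceeds `0`.
-/

theorem pos_of_forall_le_of_sum_pos {ι M : Type*} [Fintype ι] [AddCommMonoid M] [LinearOrder M]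
    [IsOrderedAddMonoid M] {f : ι → M} {i : ι}
    (hi : ∀ j, f j ≤ f i) (hsum : 0 < ∑ j, f j) : 0 < f i := by
  by_contra! h
  exact hsum.not_ge (sum_nonpos fun j _ => (hi j).trans h)

section ModifiedFrege

variable {ι : Type*} [DecidableEq ι] {p s : ℕ → ι → ℝ} {w : ℕ → ι}

theorem sum_score_eq_one [Fintype ι] (hpsum : ∀ t, 1 ≤ t → ∑ j, p t j = 1)
    (hs1 : ∀ j, s 1 j = p 1 j)
    (hsrec : ∀ t, 1 ≤ t → ∀ j,
      s (t + 1) j = s t j + p (t + 1) j - (if w t = j then 1 else 0))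
    {t : ℕ} (ht : 1 ≤ t) : ∑ j, s t j = 1 := by
  induction t, ht using Nat.le_induction with
  | base => simpa only [hs1] using hpsum 1 le_rfl
  | succ t ht ih =>
    simp only [hsrec t ht, sum_sub_distrib, sum_add_distrib, ih, hpsum (t + 1) (by omega),
      sum_ite_eq, mem_univ, if_true]
    norm_num

theorem score_sub_votes_gt_neg_one (hp0 : ∀ t j, 0 ≤ p t j) (hs1 : ∀ j, s 1 j = p 1 j)
    (hsrec : ∀ t, 1 ≤ t → ∀ j,
      s (t + 1) j = s t j + p (t + 1) j - (if w t = j then 1 else 0))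
    (hwin : ∀ t, 1 ≤ t → 0 < s t (w t)) {t : ℕ} (ht : 1 ≤ t) (j : ι) :
    -1 < s t j - p t j := by
  induction t, ht using Nat.le_induction generalizing j with
  | base => rw [hs1]; norm_num
  | succ t ht ih =>
    rw [hsrec t ht j]
    by_cases hj : w t = j
    · have := hwin t ht
      rw [if_pos hj, ← hj]
      linarith
    · have := ih j
      have := hp0 t j
      rw [if_neg hj]
      linarith

end ModifiedFrege

theorem modified_frege_score_lower_bound_general (m : ℕ)
    (p s : ℕ → Fin m → ℝ) (w : ℕ → Fin m)
    (hp0 : ∀ t j, 0 ≤ p t j)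
    (hpsum : ∀ t, 1 ≤ t → ∑ j, p t j = 1)
    (hs1 : ∀ j, s 1 j = p 1 j)
    (hsrec : ∀ t, 1 ≤ t → ∀ j,
      s (t + 1) j = s t j + p (t + 1) j - (if w t = j then 1 else 0))
    (hw : ∀ t, 1 ≤ t → ∀ j, s t j ≤ s t (w t)) :
    ∀ t, 1 ≤ t → ∀ j, -1 < s t j - p t j := by
  have hwin : ∀ t, 1 ≤ t → 0 < s t (w t) := fun t ht =>
    pos_of_forall_le_of_sum_pos (hw t ht) <| by
      rw [sum_score_eq_one hpsum hs1 hsrec ht]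
      exact one_pos
  exact fun t ht => score_sub_votes_gt_neg_one hp0 hs1 hsrec hwin ht

/-- In the modified Frege method, s_j^t - p_j^t > -1 for all candidates and times. -/
theorem modified_frege_score_lower_bound (m : ℕ) (hm : 2 ≤ m)
    (p s : ℕ → Fin m → ℝ) (w : ℕ → Fin m)
    (hp0 : ∀ t j, 0 ≤ p t j)
    (hpsum : ∀ t, 1 ≤ t → ∑ j, p t j = 1)
    (hs1 : ∀ j, s 1 j = p 1 j)
    (hsrec : ∀ t, 1 ≤ t → ∀ j,
      s (t + 1) j = s t j + p (t + 1) j - (if w t = j then 1 else 0))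
    (hw : ∀ t, 1 ≤ t → ∀ j, s t j ≤ s t (w t)) :
    ∀ t, 1 ≤ t → ∀ j, -1 < s t j - p t j :=
  modified_frege_score_lower_bound_general m p s w hp0 hpsum hs1 hsrec hw
end

section
/- In the modified Frege method with m ≥ 2 candidates, for all t ≥ 1 and all candidates j: -1 < Σ_{s=1}^t p_j^s - r_j(t) ≤ (m-1)/2, and the upper inequality is strict when m ≥ 3. -/
open Finset

/-!
Write `D t j = ∑_{u ≤ t} p u j - r_j(t)` for the quota deviation, so that `D 0 = 0` and the
accumulated score is `s (t + 1) j = D t j + p (t + 1) j`; hence `D t j = s t j - [w t = j]` and the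
scores of every round sum to `1`.

Lower bound: the winner's score is at least the average, so positive, and the score of any
other candidate is at least its previous deviation; by induction every deviation exceeds `-1`.

Upper bound: a non-winner `j` scores at most the winner `i`, and all other scores exceed `-1`, so
`2 s j ≤ s i + s j < 1 + (m - 2)` (with `≤` when `m = 2`). A deviation either drops (its candidate
wins the round and `p ≤ 1`) or equals the score of a non-winner, so the bound propagates.
-/

section Scores

variable {ι : Type*} [Fintype ι] {x : ι → ℝ} {i j : ι}

theorem pos_of_sum_eq_one_of_forall_le (hsum : ∑ k, x k = 1) (hmax : ∀ k, x k ≤ x i) :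
    0 < x i := by
  by_contra! hi
  have : ∑ k, x k ≤ ∑ _k : ι, (0 : ℝ) := sum_le_sum fun k _ => (hmax k).trans hi
  simp only [sum_const_zero] at this
  linarith

theorem sum_erase_erase_add_one [DecidableEq ι] (hsum : ∑ k, x k = 1) (hji : j ≠ i) :
    ∑ k ∈ (univ.erase i).erase j, (x k + 1) = Fintype.card ι - 1 - x i - x j := by
  have hj : j ∈ univ.erase i := mem_erase.2 ⟨hji, mem_univ j⟩
  have htotal : ∑ k, (x k + 1) = 1 + Fintype.card ι := by
    simp [sum_add_distrib, hsum]
  rw [← add_sum_erase _ _ (mem_univ i), ← add_sum_erase _ _ hj] at htotal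
  linarith

theorem two_mul_le_card_sub_one_of_le [DecidableEq ι] (hsum : ∑ k, x k = 1) (hlb : ∀ k, -1 < x k)
    (hji : j ≠ i) (hle : x j ≤ x i) : 2 * x j ≤ Fintype.card ι - 1 := by
  have hrest := sum_erase_erase_add_one hsum hji
  have : 0 ≤ ∑ k ∈ (univ.erase i).erase j, (x k + 1) :=
    sum_nonneg fun k _ => by linarith [hlb k]
  linarith

theorem two_mul_lt_card_sub_one_of_le [DecidableEq ι] (hsum : ∑ k, x k = 1) (hlb : ∀ k, -1 < x k)
    (hji : j ≠ i) (hle : x j ≤ x i) (hcard : 3 ≤ Fintype.card ι) :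
    2 * x j < Fintype.card ι - 1 := by
  have hrest := sum_erase_erase_add_one hsum hji
  have hne : ((univ.erase i).erase j).Nonempty := by
    rw [← card_pos, card_erase_of_mem (mem_erase.2 ⟨hji, mem_univ j⟩),
      card_erase_of_mem (mem_univ i), card_univ]
    omega
  have : 0 < ∑ k ∈ (univ.erase i).erase j, (x k + 1) :=
    sum_pos (fun k _ => by linarith [hlb k]) hne
  linarith

end Scores

/-- Rounds are numbered from `1`: `p t j` is the normalized plurality score of candidate `j` in
round `t`, `s t j` its accumulated score, and `w t` the representative chosen in round `t`. -/
structure IsModifiedFregeRun {ι : Type*} [Fintype ι] [DecidableEq ι]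
    (p s : ℕ → ι → ℝ) (w : ℕ → ι) : Prop where
  nonneg : ∀ t j, 0 ≤ p t j
  sum_eq_one : ∀ t, 1 ≤ t → ∑ j, p t j = 1
  score_one : ∀ j, s 1 j = p 1 j
  score_succ : ∀ t, 1 ≤ t → ∀ j,
    s (t + 1) j = s t j + p (t + 1) j - if w t = j then 1 else 0
  score_le_winner : ∀ t, 1 ≤ t → ∀ j, s t j ≤ s t (w t)

section Deviation

variable {ι : Type*} [DecidableEq ι]

def quotaDeviation (p : ℕ → ι → ℝ) (w : ℕ → ι) (t : ℕ) (j : ι) : ℝ :=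
  ∑ u ∈ Icc 1 t, p u j - #{u ∈ Icc 1 t | w u = j}

@[simp]
theorem quotaDeviation_zero (p : ℕ → ι → ℝ) (w : ℕ → ι) (j : ι) :
    quotaDeviation p w 0 j = 0 := by
  simp [quotaDeviation]

theorem quotaDeviation_succ (p : ℕ → ι → ℝ) (w : ℕ → ι) (t : ℕ) (j : ι) :
    quotaDeviation p w (t + 1) j =
      quotaDeviation p w t j + p (t + 1) j - if w (t + 1) = j then 1 else 0 := by
  rw [quotaDeviation, quotaDeviation, ← insert_Icc_right_eq_Icc_add_one (Nat.le_add_left 1 t),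
    sum_insert (by simp), filter_insert]
  split_ifs with hw
  · rw [card_insert_of_notMem (by simp)]
    push_cast
    ring
  · ring

end Deviation

namespace IsModifiedFregeRun

variable {ι : Type*} [Fintype ι] [DecidableEq ι] {p s : ℕ → ι → ℝ} {w : ℕ → ι}

theorem le_one (h : IsModifiedFregeRun p s w) {t : ℕ} (ht : 1 ≤ t) (j : ι) : p t j ≤ 1 :=
  h.sum_eq_one t ht ▸ single_le_sum (fun k _ => h.nonneg t k) (mem_univ j)

theorem sum_score_eq_one (h : IsModifiedFregeRun p s w) {t : ℕ} (ht : 1 ≤ t) :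
    ∑ j, s t j = 1 := by
  induction t, ht using Nat.le_induction with
  | base => simpa only [h.score_one] using h.sum_eq_one 1 le_rfl
  | succ t ht ih =>
    simp only [h.score_succ t ht, sum_sub_distrib, sum_add_distrib, ih,
      h.sum_eq_one (t + 1) (Nat.le_add_left 1 t), sum_ite_eq, mem_univ, if_true]
    ring

theorem score_succ_eq_quotaDeviation_add (h : IsModifiedFregeRun p s w) (t : ℕ) (j : ι) :
    s (t + 1) j = quotaDeviation p w t j + p (t + 1) j := by
  induction t with
  | zero => simp [h.score_one]
  | succ t ih =>
    rw [h.score_succ (t + 1) (Nat.le_add_left 1 t), ih, quotaDeviation_succ]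
    ring

theorem quotaDeviation_succ_eq_score_sub (h : IsModifiedFregeRun p s w) (t : ℕ) (j : ι) :
    quotaDeviation p w (t + 1) j = s (t + 1) j - if w (t + 1) = j then 1 else 0 := by
  rw [quotaDeviation_succ, h.score_succ_eq_quotaDeviation_add]

theorem neg_one_lt_quotaDeviation (h : IsModifiedFregeRun p s w) (t : ℕ) (j : ι) :
    -1 < quotaDeviation p w t j := by
  induction t generalizing j with
  | zero => simp
  | succ t ih =>
    rw [h.quotaDeviation_succ_eq_score_sub]
    split_ifs with hwj
    · subst hwj
      have := pos_of_sum_eq_one_of_forall_le (h.sum_score_eq_one (Nat.le_add_left 1 t))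
        (h.score_le_winner (t + 1) (Nat.le_add_left 1 t))
      linarith
    · rw [h.score_succ_eq_quotaDeviation_add]
      linarith [ih j, h.nonneg (t + 1) j]

theorem neg_one_lt_score (h : IsModifiedFregeRun p s w) (t : ℕ) (j : ι) :
    -1 < s (t + 1) j := by
  rw [h.score_succ_eq_quotaDeviation_add]
  linarith [h.neg_one_lt_quotaDeviation t j, h.nonneg (t + 1) j]

theorem quotaDeviation_mem_of_isLowerSet (h : IsModifiedFregeRun p s w) {S : Set ℝ}
    (hS : IsLowerSet S) (hS0 : 0 ∈ S) (hscore : ∀ t j, j ≠ w (t + 1) → s (t + 1) j ∈ S)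
    (t : ℕ) (j : ι) : quotaDeviation p w t j ∈ S := by
  induction t with
  | zero => simpa using hS0
  | succ t ih =>
    by_cases hwj : w (t + 1) = j
    · refine hS ?_ ih
      rw [quotaDeviation_succ, if_pos hwj]
      linarith [h.le_one (Nat.le_add_left 1 t) j]
    · rw [h.quotaDeviation_succ_eq_score_sub, if_neg hwj, sub_zero]
      exact hscore t j (Ne.symm hwj)

theorem two_mul_score_le (h : IsModifiedFregeRun p s w) {t : ℕ} {j : ι} (hj : j ≠ w (t + 1)) :
    2 * s (t + 1) j ≤ Fintype.card ι - 1 :=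
  two_mul_le_card_sub_one_of_le (h.sum_score_eq_one (Nat.le_add_left 1 t)) (h.neg_one_lt_score t)
    hj (h.score_le_winner (t + 1) (Nat.le_add_left 1 t) j)

theorem two_mul_score_lt (h : IsModifiedFregeRun p s w) {t : ℕ} {j : ι} (hj : j ≠ w (t + 1))
    (hcard : 3 ≤ Fintype.card ι) : 2 * s (t + 1) j < Fintype.card ι - 1 :=
  two_mul_lt_card_sub_one_of_le (h.sum_score_eq_one (Nat.le_add_left 1 t)) (h.neg_one_lt_score t)
    hj (h.score_le_winner (t + 1) (Nat.le_add_left 1 t) j) hcard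

end IsModifiedFregeRun

theorem modified_frege_quota_bounds_general (m : ℕ)
    (p s : ℕ → Fin m → ℝ) (w : ℕ → Fin m)
    (hp0 : ∀ t j, 0 ≤ p t j)
    (hpsum : ∀ t, 1 ≤ t → ∑ j, p t j = 1)
    (hs1 : ∀ j, s 1 j = p 1 j)
    (hsrec : ∀ t, 1 ≤ t → ∀ j,
      s (t + 1) j = s t j + p (t + 1) j - (if w t = j then 1 else 0))
    (hw : ∀ t, 1 ≤ t → ∀ j, s t j ≤ s t (w t)) :
    ∀ t, 1 ≤ t → ∀ j,
      (-1 < (∑ u ∈ Finset.Icc 1 t, p u j) -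
          ((Finset.Icc 1 t).filter (fun u => w u = j)).card) ∧
      ((∑ u ∈ Finset.Icc 1 t, p u j) -
          ((Finset.Icc 1 t).filter (fun u => w u = j)).card ≤ ((m : ℝ) - 1) / 2) ∧
      (3 ≤ m →
        (∑ u ∈ Finset.Icc 1 t, p u j) -
            ((Finset.Icc 1 t).filter (fun u => w u = j)).card < ((m : ℝ) - 1) / 2) := by
  have h : IsModifiedFregeRun p s w := ⟨hp0, hpsum, hs1, hsrec, hw⟩
  intro t _ j
  have hm : (1 : ℝ) ≤ m := by exact_mod_cast j.pos
  refine ⟨h.neg_one_lt_quotaDeviation t j, ?_, fun hm3 => ?_⟩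
  · refine h.quotaDeviation_mem_of_isLowerSet (isLowerSet_Iic _) ?_ (fun u k hk => ?_) t j
    · simp only [Set.mem_Iic]; linarith
    · have := h.two_mul_score_le hk
      rw [Fintype.card_fin] at this
      simp only [Set.mem_Iic]; linarith
  · have hm3' : (3 : ℝ) ≤ m := by exact_mod_cast hm3
    refine h.quotaDeviation_mem_of_isLowerSet (isLowerSet_Iio _) ?_ (fun u k hk => ?_) t j
    · simp only [Set.mem_Iio]; linarith
    · have := h.two_mul_score_lt hk (by rwa [Fintype.card_fin])
      rw [Fintype.card_fin] at this
      simp only [Set.mem_Iio]; linarith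

/-- Modified Frege: -1 < Σ p_j^s - r_j(t) ≤ (m-1)/2, strictly above if m ≥ 3. -/
theorem modified_frege_quota_bounds (m : ℕ) (hm : 2 ≤ m)
    (p s : ℕ → Fin m → ℝ) (w : ℕ → Fin m)
    (hp0 : ∀ t j, 0 ≤ p t j)
    (hpsum : ∀ t, 1 ≤ t → ∑ j, p t j = 1)
    (hs1 : ∀ j, s 1 j = p 1 j)
    (hsrec : ∀ t, 1 ≤ t → ∀ j,
      s (t + 1) j = s t j + p (t + 1) j - (if w t = j then 1 else 0))
    (hw : ∀ t, 1 ≤ t → ∀ j, s t j ≤ s t (w t)) :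
    ∀ t, 1 ≤ t → ∀ j,
      (-1 < (∑ u ∈ Finset.Icc 1 t, p u j) -
          ((Finset.Icc 1 t).filter (fun u => w u = j)).card) ∧
      ((∑ u ∈ Finset.Icc 1 t, p u j) -
          ((Finset.Icc 1 t).filter (fun u => w u = j)).card ≤ ((m : ℝ) - 1) / 2) ∧
      (3 ≤ m →
        (∑ u ∈ Finset.Icc 1 t, p u j) -
            ((Finset.Icc 1 t).filter (fun u => w u = j)).card < ((m : ℝ) - 1) / 2) :=
  modified_frege_quota_bounds_general m p s w hp0 hpsum hs1 hsrec hw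
end

section
/- The modified Frege method satisfies variable upper quota: for every sequence of normalized plurality scores and every time t ≥ 1 and candidate j, r_j(t) ≤ ⌈Σ_{s=1}^t p_j^s⌉. -/
open Finset Filter

/-- The modified Frege method satisfies variable upper quota. -/
theorem modified_frege_variable_upper_quota (m : ℕ) (hm : 2 ≤ m)
    (p s : ℕ → Fin m → ℝ) (w : ℕ → Fin m)
    (hp0 : ∀ t j, 0 ≤ p t j)
    (hpsum : ∀ t, 1 ≤ t → ∑ j, p t j = 1)
    (hs1 : ∀ j, s 1 j = p 1 j)
    (hsrec : ∀ t, 1 ≤ t → ∀ j,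
      s (t + 1) j = s t j + p (t + 1) j - (if w t = j then 1 else 0))
    (hw : ∀ t, 1 ≤ t → ∀ j, s t j ≤ s t (w t)) :
    ∀ t, 1 ≤ t → ∀ j,
      (((Finset.Icc 1 t).filter (fun u => w u = j)).card : ℤ) ≤
        ⌈∑ u ∈ Finset.Icc 1 t, p u j⌉ := by
  have hA : ∀ t, 1 ≤ t → ∀ j, s t j =
      (∑ u ∈ Finset.Icc 1 t, p u j) -
        (((Finset.Icc 1 (t-1)).filter (fun u => w u = j)).card : ℝ) := by
    intro t ht
    induction t, ht using Nat.le_induction with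
    | base => intro j; simp [hs1]
    | succ t ht ih =>
      intro j
      rw [hsrec t ht j, ih j]
      have h1 : Finset.Icc 1 (t+1) = insert (t+1) (Finset.Icc 1 t) :=
        (Finset.insert_Icc_right_eq_Icc_add_one (by omega)).symm
      have h2 : (t+1) - 1 = t := by omega
      rw [h1, h2, Finset.sum_insert (by simp)]
      have h3 : Finset.Icc 1 t = insert t (Finset.Icc 1 (t-1)) := by
        have ht' : t = (t-1)+1 := by omega
        conv_lhs => rw [ht']
        rw [← Finset.insert_Icc_right_eq_Icc_add_one (by omega), ← ht']
      rw [h3, Finset.filter_insert]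
      by_cases hwt : w t = j
      · rw [if_pos hwt, if_pos hwt,
          Finset.card_insert_of_notMem (by intro hmem; exact absurd (Finset.mem_Icc.mp (Finset.mem_filter.mp hmem).1).2 (by omega)),
          Finset.sum_insert (by simp [Nat.lt_irrefl]; omega)]
        push_cast; ring
      · rw [if_neg hwt, if_neg hwt, Finset.sum_insert (by simp; omega)]; ring
  have hB : ∀ t, 1 ≤ t → ∑ j, s t j = 1 := by
    intro t ht
    induction t, ht using Nat.le_induction with
    | base => simp only [hs1]; exact hpsum 1 le_rfl
    | succ t ht ih =>
      simp only [hsrec t ht]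
      rw [Finset.sum_sub_distrib, Finset.sum_add_distrib, ih,
        hpsum (t+1) (by omega)]
      simp
  have hC : ∀ t, 1 ≤ t → 0 < s t (w t) := by
    intro t ht
    by_contra h
    push_neg at h
    have hle : ∑ j, s t j ≤ 0 :=
      Finset.sum_nonpos fun j _ => (hw t ht j).trans h
    linarith [hB t ht]
  intro t ht
  induction t, ht using Nat.le_induction with
  | base =>
    intro j
    by_cases hwj : w 1 = j
    · have hc : ((Finset.Icc 1 1).filter (fun u => w u = j)).card = 1 := by
        rw [Finset.Icc_self, Finset.filter_singleton, if_pos hwj,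
          Finset.card_singleton]
      rw [hc]
      have hpos : 0 < p 1 j := by
        have h := hC 1 le_rfl; rw [hwj, hs1] at h; exact h
      rw [show ∑ u ∈ Finset.Icc 1 1, p u j = p 1 j by simp]
      have h0 : (0 : ℤ) < ⌈p 1 j⌉ := Int.lt_ceil.mpr (by exact_mod_cast hpos)
      omega
    · have hc : ((Finset.Icc 1 1).filter (fun u => w u = j)).card = 0 := by
        rw [Finset.Icc_self, Finset.filter_singleton, if_neg hwj,
          Finset.card_empty]
      rw [hc]
      exact_mod_cast Int.ceil_nonneg
        (Finset.sum_nonneg fun u _ => hp0 u j)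
  | succ t ht ih =>
    intro j
    have h1 : Finset.Icc 1 (t+1) = insert (t+1) (Finset.Icc 1 t) :=
      (Finset.insert_Icc_right_eq_Icc_add_one (by omega)).symm
    by_cases hwj : w (t+1) = j
    · have hcard : ((Finset.Icc 1 (t+1)).filter (fun u => w u = j)).card
          = ((Finset.Icc 1 t).filter (fun u => w u = j)).card + 1 := by
        rw [h1, Finset.filter_insert, if_pos hwj,
          Finset.card_insert_of_notMem (by simp)]
      rw [hcard]
      have hspos := hC (t+1) (by omega)
      rw [hwj, hA (t+1) (by omega) j, show (t+1)-1 = t from rfl] at hspos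
      have hlt : (((Finset.Icc 1 t).filter (fun u => w u = j)).card : ℤ)
          < ⌈∑ u ∈ Finset.Icc 1 (t+1), p u j⌉ := by
        rw [Int.lt_ceil]; push_cast; linarith
      omega
    · have hcard : ((Finset.Icc 1 (t+1)).filter (fun u => w u = j)).card
          = ((Finset.Icc 1 t).filter (fun u => w u = j)).card := by
        rw [h1, Finset.filter_insert, if_neg hwj]
      rw [hcard]
      refine (ih j).trans (Int.ceil_le_ceil ?_)
      rw [h1, Finset.sum_insert (by simp)]
      linarith [hp0 (t+1) j]
end

section
/- The modified Frege method with m = 2 or m = 3 candidates satisfies variable lower quota: for every time t ≥ 1 and every candidate j, r_j(t) ≥ ⌊Σ_{s=1}^t p_j^s⌋. -/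
open Finset Filter

private lemma frege_winner_pos {m : ℕ} (hm : 2 ≤ m) (s' : Fin m → ℝ) (w' : Fin m)
    (hsum1 : ∑ k, s' k = 1) (hmax : ∀ k, s' k ≤ s' w') : 0 < s' w' := by
  have h1 : (1:ℝ) ≤ (m:ℝ) * s' w' := by
    calc (1:ℝ) = ∑ k, s' k := hsum1.symm
    _ ≤ ∑ _k : Fin m, s' w' := Finset.sum_le_sum (fun k _ => hmax k)
    _ = (m:ℝ) * s' w' := by simp [Finset.sum_const, Finset.card_univ, mul_comm]
  have hm' : (0:ℝ) < m := by positivity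
  nlinarith

private lemma frege_nonwin_lt_one {m : ℕ} (hm23 : m = 2 ∨ m = 3) (s' : Fin m → ℝ)
    (w' j : Fin m) (hsum1 : ∑ k, s' k = 1) (hlow : ∀ k, -1 < s' k)
    (hmax : ∀ k, s' k ≤ s' w') (hj : j ≠ w') : s' j < 1 := by
  set R := (Finset.univ : Finset (Fin m)) \ {j, w'} with hR
  have hcard : R.card = m - 2 := by
    rw [hR, Finset.card_sdiff_of_subset (Finset.subset_univ _), Finset.card_univ,
      Fintype.card_fin, Finset.card_insert_of_notMem (by simp [hj]),
      Finset.card_singleton]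
  have hsplit : (∑ k ∈ R, s' k) + (s' j + s' w') = 1 := by
    rw [← Finset.sum_pair hj, ← hsum1, hR]
    exact Finset.sum_sdiff (Finset.subset_univ _)
  have hRsum : -1 < ∑ k ∈ R, s' k := by
    rcases hm23 with rfl | rfl
    · have : R = ∅ := Finset.card_eq_zero.mp (by omega)
      rw [this]; norm_num
    · obtain ⟨k, hk⟩ := Finset.card_eq_one.mp (by omega : R.card = 1)
      rw [hk, Finset.sum_singleton]; exact hlow k
  have := hmax j
  linarith

/-- The modified Frege method with 2 or 3 candidates satisfies variable lower quota. -/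
theorem modified_frege_variable_lower_quota_small (m : ℕ) (hm : 2 ≤ m)
    (p s : ℕ → Fin m → ℝ) (w : ℕ → Fin m)
    (hp0 : ∀ t j, 0 ≤ p t j)
    (hpsum : ∀ t, 1 ≤ t → ∑ j, p t j = 1)
    (hs1 : ∀ j, s 1 j = p 1 j)
    (hsrec : ∀ t, 1 ≤ t → ∀ j,
      s (t + 1) j = s t j + p (t + 1) j - (if w t = j then 1 else 0))
    (hw : ∀ t, 1 ≤ t → ∀ j, s t j ≤ s t (w t))
    (hm23 : m = 2 ∨ m = 3) :
    ∀ t, 1 ≤ t → ∀ j,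
      ⌊∑ u ∈ Finset.Icc 1 t, p u j⌋ ≤
        (((Finset.Icc 1 t).filter (fun u => w u = j)).card : ℤ) := by
  -- each share is at most 1
  have hp1 : ∀ t, 1 ≤ t → ∀ j, p t j ≤ 1 := by
    intro t ht j
    calc p t j ≤ ∑ k, p t k :=
      Finset.single_le_sum (fun k _ => hp0 t k) (Finset.mem_univ j)
    _ = 1 := hpsum t ht
  -- sum of scores is 1
  have hssum : ∀ t, 1 ≤ t → ∑ j, s t j = 1 := by
    intro t ht
    induction t, ht using Nat.le_induction with
    | base => simp only [hs1]; exact hpsum 1 le_rfl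
    | succ n hn ih =>
      have : ∑ j, s (n+1) j = (∑ j, s n j) + (∑ j, p (n+1) j)
          - ∑ j, (if w n = j then (1:ℝ) else 0) := by
        rw [← Finset.sum_add_distrib, ← Finset.sum_sub_distrib]
        exact Finset.sum_congr rfl (fun j _ => hsrec n hn j)
      rw [this, ih, hpsum (n+1) (by omega)]
      simp
  -- deficit formula
  have hform : ∀ t, 1 ≤ t → ∀ j,
      s t j - (if w t = j then (1:ℝ) else 0)
        = (∑ u ∈ Finset.Icc 1 t, p u j)
          - (((Finset.Icc 1 t).filter (fun u => w u = j)).card : ℝ) := by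
    intro t ht
    induction t, ht using Nat.le_induction with
    | base =>
      intro j
      rw [hs1]
      have h1 : Finset.Icc 1 1 = {1} := by decide
      by_cases h : w 1 = j <;> simp [h1, Finset.filter_singleton, h]
    | succ n hn ih =>
      intro j
      have hins : Finset.Icc 1 (n+1) = insert (n+1) (Finset.Icc 1 n) := by
        ext x; simp only [Finset.mem_Icc, Finset.mem_insert]; omega
      have hsum' : (∑ u ∈ Finset.Icc 1 (n+1), p u j)
          = (∑ u ∈ Finset.Icc 1 n, p u j) + p (n+1) j := by
        rw [hins, Finset.sum_insert (by simp)]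
        ring
      have hcard : (((Finset.Icc 1 (n+1)).filter (fun u => w u = j)).card : ℝ)
          = (((Finset.Icc 1 n).filter (fun u => w u = j)).card : ℝ)
            + (if w (n+1) = j then (1:ℝ) else 0) := by
        rw [hins, Finset.filter_insert]
        by_cases h : w (n+1) = j
        · rw [if_pos h, Finset.card_insert_of_notMem (by simp), if_pos h]
          push_cast; ring
        · rw [if_neg h, if_neg h]; ring
      have hr := hsrec n hn j
      have := ih j
      rw [hsum', hcard]
      linarith
  -- the key invariant: deficits are strictly between -1 and 1
  have hinv : ∀ t, 1 ≤ t → ∀ j,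
      -1 < s t j - (if w t = j then (1:ℝ) else 0) ∧
      s t j - (if w t = j then (1:ℝ) else 0) < 1 := by
    intro t ht
    induction t, ht using Nat.le_induction with
    | base =>
      intro j
      have hlow : ∀ k, -1 < s 1 k := by
        intro k; rw [hs1]; have := hp0 1 k; linarith
      have hpos := frege_winner_pos hm (s 1) (w 1) (hssum 1 le_rfl) (hw 1 le_rfl)
      by_cases h : w 1 = j
      · subst h
        rw [if_pos rfl]
        constructor
        · linarith
        · rw [hs1]; have := hp1 1 le_rfl (w 1); linarith
      · rw [if_neg h]
        refine ⟨by linarith [hlow j], ?_⟩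
        simpa using frege_nonwin_lt_one hm23 (s 1) (w 1) j (hssum 1 le_rfl) hlow
          (hw 1 le_rfl) (fun hh => h hh.symm)
    | succ n hn ih =>
      intro j
      have hn1 : 1 ≤ n + 1 := by omega
      have hlow : ∀ k, -1 < s (n+1) k := by
        intro k
        have hr := hsrec n hn k
        have := (ih k).1
        have := hp0 (n+1) k
        linarith
      have hpos := frege_winner_pos hm (s (n+1)) (w (n+1)) (hssum (n+1) hn1)
        (hw (n+1) hn1)
      by_cases h : w (n+1) = j
      · subst h
        rw [if_pos rfl]
        refine ⟨by linarith, ?_⟩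
        have hr := hsrec n hn (w (n+1))
        have h1 := (ih (w (n+1))).2
        have h2 := hp1 (n+1) hn1 (w (n+1))
        by_cases h' : w n = w (n+1)
        · rw [if_pos h'] at h1 hr; linarith
        · rw [if_neg h'] at h1 hr; linarith
      · rw [if_neg h]
        refine ⟨by linarith [hlow j], ?_⟩
        simpa using frege_nonwin_lt_one hm23 (s (n+1)) (w (n+1)) j (hssum (n+1) hn1) hlow
          (hw (n+1) hn1) (fun hh => h hh.symm)
  -- conclude
  intro t ht j
  have h1 := (hinv t ht j).2
  rw [hform t ht j] at h1
  have h2 : (∑ u ∈ Finset.Icc 1 t, p u j)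
      < ((((((Finset.Icc 1 t).filter (fun u => w u = j)).card : ℤ)) + 1 : ℤ) : ℝ) := by
    push_cast
    linarith
  have h3 := Int.floor_lt.mpr h2
  omega
end

section
/- In the modified Frege method with m ≥ 4 candidates, for every candidate j and every time t ≥ 1: r_j(t) ≥ ⌊Σ_{s=1}^t p_j^s⌋ - ⌈(m-3)/2⌉. -/
open Finset Filter

/-- Deficit function for the modified Frege method. -/
def fregeDeficit {m : ℕ} (s : ℕ → Fin m → ℝ) (w : ℕ → Fin m) (t : ℕ) (j : Fin m) : ℝ :=
  s t j - if w t = j then 1 else 0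

/-- Modified Frege with m ≥ 4: lower quota is violated by at most ⌈(m-3)/2⌉. -/
theorem modified_frege_lower_quota_violation_bound (m : ℕ) (hm : 2 ≤ m)
    (p s : ℕ → Fin m → ℝ) (w : ℕ → Fin m)
    (hp0 : ∀ t j, 0 ≤ p t j)
    (hpsum : ∀ t, 1 ≤ t → ∑ j, p t j = 1)
    (hs1 : ∀ j, s 1 j = p 1 j)
    (hsrec : ∀ t, 1 ≤ t → ∀ j,
      s (t + 1) j = s t j + p (t + 1) j - (if w t = j then 1 else 0))
    (hw : ∀ t, 1 ≤ t → ∀ j, s t j ≤ s t (w t))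
    (hm4 : 4 ≤ m) :
    ∀ t, 1 ≤ t → ∀ j,
      ⌊∑ u ∈ Finset.Icc 1 t, p u j⌋ - ⌈((m : ℝ) - 3) / 2⌉ ≤
        (((Finset.Icc 1 t).filter (fun u => w u = j)).card : ℤ) := by
  have hp1 : ∀ t, 1 ≤ t → ∀ j, p t j ≤ 1 := by
    intro t ht j
    calc p t j ≤ ∑ j', p t j' := Finset.single_le_sum (fun i _ => hp0 t i) (mem_univ j)
    _ = 1 := hpsum t ht
  -- sum of scores is always 1
  have hsum : ∀ t, 1 ≤ t → ∑ j, s t j = 1 := by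
    intro t ht
    induction t, ht using Nat.le_induction with
    | base => simp only [hs1]; exact hpsum 1 le_rfl
    | succ t ht ih =>
        have h1 : ∑ j, s (t + 1) j
            = ∑ j, (s t j + p (t + 1) j - (if w t = j then (1:ℝ) else 0)) :=
          Finset.sum_congr rfl fun j _ => hsrec t ht j
        rw [h1, Finset.sum_sub_distrib, Finset.sum_add_distrib, ih,
          hpsum (t + 1) (by omega)]
        simp
  -- winner score is positive
  have hwpos : ∀ t, 1 ≤ t → 0 < s t (w t) := by
    intro t ht
    by_contra h
    push_neg at h
    have : ∑ j, s t j ≤ 0 := Finset.sum_nonpos fun j _ => (hw t ht j).trans h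
    rw [hsum t ht] at this; linarith
  set D := fregeDeficit s w with hD
  have hDdef : ∀ t j, D t j = s t j - (if w t = j then 1 else 0) := fun t j => rfl
  have hDsucc : ∀ t, 1 ≤ t → ∀ j,
      D (t + 1) j = D t j + p (t + 1) j - (if w (t + 1) = j then 1 else 0) := by
    intro t ht j
    rw [hDdef, hDdef, hsrec t ht j]
    ring
  -- lower bound on deficit
  have hDlow : ∀ t, 1 ≤ t → ∀ j, -1 < D t j := by
    intro t ht
    induction t, ht using Nat.le_induction with
    | base =>
        intro j
        rw [hDdef]
        by_cases hj : w 1 = j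
        · rw [if_pos hj]
          have h0 := hwpos 1 le_rfl
          rw [hj] at h0
          linarith
        · rw [if_neg hj]
          have := hp0 1 j
          rw [hs1]
          linarith
    | succ t ht ih =>
        intro j
        rw [hDdef]
        by_cases hj : w (t + 1) = j
        · rw [if_pos hj]
          have h0 := hwpos (t + 1) (by omega)
          rw [hj] at h0
          linarith
        · rw [if_neg hj]
          have h1 : s (t + 1) j = D t j + p (t + 1) j := by
            rw [hDdef, hsrec t ht j]; ring
          have := ih j
          have := hp0 (t + 1) j
          rw [h1]; linarith
  -- strict lower bound on scores at times ≥ 2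
  have hslow : ∀ t, 1 ≤ t → ∀ j, -1 < s (t + 1) j := by
    intro t ht j
    have h1 : s (t + 1) j = D t j + p (t + 1) j := by
      rw [hDdef, hsrec t ht j]; ring
    have := hDlow t ht j
    have := hp0 (t + 1) j
    rw [h1]; linarith
  have hmr : (4 : ℝ) ≤ (m : ℝ) := by exact_mod_cast hm4
  -- upper bound on deficit
  have hDup : ∀ t, 1 ≤ t → ∀ j, D t j < ((m : ℝ) - 1) / 2 := by
    intro t ht
    induction t, ht using Nat.le_induction with
    | base =>
        intro j
        have h1 : D 1 j ≤ p 1 j := by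
          rw [hDdef, hs1]
          split <;> norm_num
        have := hp1 1 le_rfl j
        linarith
    | succ t ht ih =>
        intro j
        by_cases hj : w (t + 1) = j
        · have h1 := hDsucc t ht j
          rw [if_pos hj] at h1
          have := hp1 (t + 1) (by omega) j
          have := ih j
          linarith
        · -- j is not the winner at time t+1
          have hDeq : D (t + 1) j = s (t + 1) j := by
            rw [hDdef, if_neg hj]; ring
          rw [hDeq]
          set k := w (t + 1) with hk
          have hjk : j ≠ k := fun h => hj h.symm
          have hle : s (t + 1) j ≤ s (t + 1) k := hw (t + 1) (by omega) j
          set A := (Finset.univ : Finset (Fin m)) \ {j, k} with hA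
          have hsub : ({j, k} : Finset (Fin m)) ⊆ Finset.univ := Finset.subset_univ _
          have hcardA : A.card = m - 2 := by
            rw [hA, Finset.card_sdiff_of_subset hsub, Finset.card_univ, Fintype.card_fin,
              Finset.card_pair hjk]
          have hAne : A.Nonempty := by
            rw [← Finset.card_pos, hcardA]; omega
          have hsplit : (∑ i ∈ A, s (t + 1) i) + (s (t + 1) j + s (t + 1) k)
              = ∑ i, s (t + 1) i := by
            rw [← Finset.sum_pair hjk]
            exact Finset.sum_sdiff hsub
          have hApos : -((m : ℝ) - 2) < ∑ i ∈ A, s (t + 1) i := by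
            have h1 : ∑ i ∈ A, (-1 : ℝ) < ∑ i ∈ A, s (t + 1) i :=
              Finset.sum_lt_sum_of_nonempty hAne fun i _ => hslow t ht i
            have h2 : ∑ i ∈ A, (-1 : ℝ) = -((m : ℝ) - 2) := by
              rw [Finset.sum_const, hcardA, nsmul_eq_mul]
              have h3 : ((m - 2 : ℕ) : ℝ) = (m : ℝ) - 2 := by
                have h4 : (2 : ℕ) ≤ m := hm
                push_cast [Nat.cast_sub h4]
                ring
              rw [h3]; ring
            linarith
          have hsum1 : ∑ i, s (t + 1) i = 1 := hsum (t + 1) (by omega)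
          rw [hsum1] at hsplit
          linarith
  -- deficit equals quota minus number of wins
  have hDr : ∀ t, 1 ≤ t → ∀ j,
      D t j = (∑ u ∈ Finset.Icc 1 t, p u j)
        - (((Finset.Icc 1 t).filter (fun u => w u = j)).card : ℝ) := by
    intro t ht
    induction t, ht using Nat.le_induction with
    | base =>
        intro j
        rw [hDdef]
        simp only [hs1, Finset.Icc_self, Finset.sum_singleton, Finset.filter_singleton]
        by_cases hj : w 1 = j
        · simp [hj]
        · simp [hj]
    | succ t ht ih =>
        intro j
        have hnotmem : t + 1 ∉ Finset.Icc 1 t := by simp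
        have hIcc : Finset.Icc 1 (t + 1) = insert (t + 1) (Finset.Icc 1 t) :=
          (Finset.insert_Icc_right_eq_Icc_add_one (by omega)).symm
        rw [hDsucc t ht j, ih j, hIcc, Finset.sum_insert hnotmem,
          Finset.filter_insert]
        by_cases hj : w (t + 1) = j
        · rw [if_pos hj, if_pos hj, Finset.card_insert_of_notMem
            (fun h => hnotmem (Finset.mem_filter.mp h).1)]
          push_cast
          ring
        · rw [if_neg hj, if_neg hj]
          ring
  -- conclude
  intro t ht j
  have hkey : (∑ u ∈ Finset.Icc 1 t, p u j)
      - (((Finset.Icc 1 t).filter (fun u => w u = j)).card : ℝ)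
      < ((m : ℝ) - 1) / 2 := by
    rw [← hDr t ht j]; exact hDup t ht j
  have hceil : ⌈((m : ℝ) - 3) / 2⌉ = ⌈((m : ℝ) - 1) / 2⌉ - 1 := by
    have h : ((m : ℝ) - 3) / 2 = ((m : ℝ) - 1) / 2 - 1 := by ring
    rw [h, Int.ceil_sub_one]
  rw [hceil]
  set S := ∑ u ∈ Finset.Icc 1 t, p u j with hS
  set r := ((Finset.Icc 1 t).filter (fun u => w u = j)).card with hr
  have hfl : (⌊S⌋ : ℝ) ≤ S := Int.floor_le S
  have hcl : ((m : ℝ) - 1) / 2 ≤ (⌈((m : ℝ) - 1) / 2⌉ : ℝ) := Int.le_ceil _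
  have hlt : ((⌊S⌋ - (r : ℤ) : ℤ) : ℝ) < ((⌈((m : ℝ) - 1) / 2⌉ : ℤ) : ℝ) := by
    push_cast
    linarith
  have hlt' : ⌊S⌋ - (r : ℤ) < ⌈((m : ℝ) - 1) / 2⌉ := by exact_mod_cast hlt
  omega
end

section
/- In the modified Frege method with fixed normalized plurality scores p_j (i.e., p_j^t = p_j for all t), for every candidate j: lim_{t→∞} r_j(t)/t = p_j. -/
open Finset Filter

/-- Modified Frege with a fixed electorate: the fraction of wins converges to p_j. -/
theorem modified_frege_asymptotic_proportionality (m : ℕ) (hm : 2 ≤ m)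
    (p : Fin m → ℝ) (s : ℕ → Fin m → ℝ) (w : ℕ → Fin m)
    (hp0 : ∀ j, 0 ≤ p j)
    (hpsum : ∑ j, p j = 1)
    (hs1 : ∀ j, s 1 j = p j)
    (hsrec : ∀ t, 1 ≤ t → ∀ j,
      s (t + 1) j = s t j + p j - (if w t = j then 1 else 0))
    (hw : ∀ t, 1 ≤ t → ∀ j, s t j ≤ s t (w t)) :
    ∀ j, Tendsto
      (fun t => (((Finset.Icc 1 t).filter (fun u => w u = j)).card : ℝ) / t)
      atTop (nhds (p j)) := by
  have hmR : (2 : ℝ) ≤ (m : ℝ) := by exact_mod_cast hm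
  -- sum of scores is always 1
  have hsum : ∀ t, 1 ≤ t → ∑ j, s t j = 1 := by
    intro t ht
    induction t, ht using Nat.le_induction with
    | base => simp [hs1, hpsum]
    | succ n hn ih =>
      have h1 : ∑ j, s (n + 1) j
          = ∑ j, (s n j + p j - if w n = j then (1 : ℝ) else 0) :=
        Finset.sum_congr rfl fun j _ => hsrec n hn j
      rw [h1]
      rw [Finset.sum_sub_distrib, Finset.sum_add_distrib, ih, hpsum,
        Finset.sum_ite_eq Finset.univ (w n) (fun _ => (1 : ℝ))]
      simp
  -- the winner's score is positive
  have hwin : ∀ t, 1 ≤ t → 0 < s t (w t) := by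
    intro t ht
    have h1 : (1 : ℝ) ≤ (m : ℝ) * s t (w t) := by
      have := Finset.sum_le_card_nsmul Finset.univ (s t) (s t (w t))
        (fun j _ => hw t ht j)
      rw [hsum t ht] at this
      simpa [nsmul_eq_mul, Finset.card_univ] using this
    nlinarith
  -- lower bound on scores
  have hlow : ∀ t, 1 ≤ t → ∀ j, (-1 : ℝ) < s t j := by
    intro t ht
    induction t, ht using Nat.le_induction with
    | base => intro j; have := hp0 j; rw [hs1]; linarith
    | succ n hn ih =>
      intro j
      rw [hsrec n hn j]
      by_cases h : w n = j
      · have := hwin n hn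
        rw [h] at this
        have := hp0 j
        simp only [if_pos h]
        linarith
      · have := ih j
        have := hp0 j
        simp only [if_neg h]
        linarith
  -- upper bound on scores
  have hub : ∀ t, 1 ≤ t → ∀ j, s t j ≤ (m : ℝ) := by
    intro t ht j
    have h1 := hsum t ht
    have h2 : s t j + ∑ k ∈ Finset.univ.erase j, s t k = 1 := by
      rw [Finset.add_sum_erase Finset.univ (s t) (Finset.mem_univ j)]
      exact h1
    have h3 : (Finset.univ.erase j).card • (-1 : ℝ)
        ≤ ∑ k ∈ Finset.univ.erase j, s t k := by
      apply Finset.card_nsmul_le_sum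
      intro k _
      exact le_of_lt (hlow t ht k)
    have hcard : (Finset.univ.erase j).card = m - 1 := by
      rw [Finset.card_erase_of_mem (Finset.mem_univ j)]
      simp
    rw [hcard] at h3
    have hcast : ((m - 1 : ℕ) : ℝ) = (m : ℝ) - 1 := by
      have : 1 ≤ m := by omega
      push_cast [Nat.cast_sub this]
      ring
    rw [nsmul_eq_mul, hcast] at h3
    nlinarith
  -- p j ≤ 1
  have hp1 : ∀ j, p j ≤ 1 := by
    intro j
    rw [← hpsum]
    exact Finset.single_le_sum (fun k _ => hp0 k) (Finset.mem_univ j)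
  -- the key identity
  have hkey : ∀ j, ∀ t, 1 ≤ t →
      (((Finset.Icc 1 t).filter (fun u => w u = j)).card : ℝ)
        = t * p j + p j - s (t + 1) j := by
    intro j t ht
    induction t, ht using Nat.le_induction with
    | base =>
      rw [hsrec 1 le_rfl j, hs1]
      by_cases h : w 1 = j <;> simp [Finset.Icc_self, Finset.filter_singleton, h] <;> ring
    | succ n hn ih =>
      have hins : Finset.Icc 1 (n + 1) = insert (n + 1) (Finset.Icc 1 n) :=
        (Finset.insert_Icc_right_eq_Icc_add_one (by omega)).symm
      rw [hins, Finset.filter_insert]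
      rw [hsrec (n + 1) (by omega) j]
      by_cases h : w (n + 1) = j
      · rw [if_pos h, Finset.card_insert_of_notMem (by simp), if_pos h]
        push_cast
        rw [ih]
        ring
      · rw [if_neg h, if_neg h, ih]
        push_cast
        ring
  intro j
  -- error term goes to zero
  have h0 : Tendsto (fun t : ℕ => (p j - s (t + 1) j) / t) atTop (nhds 0) := by
    apply squeeze_zero_norm (a := fun t : ℕ => ((m : ℝ) + 1) / t)
    · intro t
      rcases Nat.eq_zero_or_pos t with h | h
      · simp [h]
      · have ht1 : 1 ≤ t + 1 := by omega
        have hl := hlow (t + 1) ht1 j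
        have hu := hub (t + 1) ht1 j
        have hpj0 := hp0 j
        have hpj1 := hp1 j
        rw [norm_div]
        have hnum : ‖p j - s (t + 1) j‖ ≤ (m : ℝ) + 1 := by
          rw [Real.norm_eq_abs, abs_le]
          constructor <;> linarith
        have hden : ‖((t : ℕ) : ℝ)‖ = (t : ℝ) := by
          rw [Real.norm_eq_abs, abs_of_nonneg (by positivity)]
        rw [hden]
        have htpos : (0 : ℝ) < (t : ℝ) := by exact_mod_cast h
        gcongr
    · exact tendsto_const_div_atTop_nhds_zero_nat ((m : ℝ) + 1)
  have hmain : Tendsto (fun t : ℕ => p j + (p j - s (t + 1) j) / t)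
      atTop (nhds (p j)) := by
    simpa using tendsto_const_nhds.add h0
  refine hmain.congr' ?_
  filter_upwards [eventually_ge_atTop 1] with t ht
  rw [hkey j t ht]
  have htR : (t : ℝ) ≠ 0 := by
    have : 0 < t := ht
    positivity
  field_simp
  ring
end

section
/- In the modified Frege method, if for every candidate j the Cesàro means converge, i.e., lim_{t→∞} (Σ_{s=1}^t p_j^s)/t = p_j* for some p_j* ∈ [0,1], then lim_{t→∞} r_j(t)/t = p_j* for every candidate j. -/
open Finset Filter

/-- Modified Frege: if Cesàro means of the plurality scores converge, the win
frequencies converge to the same limits. -/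
theorem modified_frege_asymptotic_proportionality_varying (m : ℕ) (hm : 2 ≤ m)
    (p s : ℕ → Fin m → ℝ) (w : ℕ → Fin m)
    (hp0 : ∀ t j, 0 ≤ p t j)
    (hpsum : ∀ t, 1 ≤ t → ∑ j, p t j = 1)
    (hs1 : ∀ j, s 1 j = p 1 j)
    (hsrec : ∀ t, 1 ≤ t → ∀ j,
      s (t + 1) j = s t j + p (t + 1) j - (if w t = j then 1 else 0))
    (hw : ∀ t, 1 ≤ t → ∀ j, s t j ≤ s t (w t))
    (pstar : Fin m → ℝ)
    (hpstar : ∀ j, pstar j ∈ Set.Icc (0 : ℝ) 1)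
    (hcesaro : ∀ j, Tendsto (fun t => (∑ u ∈ Finset.Icc 1 t, p u j) / t)
      atTop (nhds (pstar j))) :
    ∀ j, Tendsto
      (fun t => (((Finset.Icc 1 t).filter (fun u => w u = j)).card : ℝ) / t)
      atTop (nhds (pstar j)) := by
  have hmpos : (0 : ℝ) < m := by
    have : (2 : ℝ) ≤ m := by exact_mod_cast hm
    linarith
  -- the total score is 1 at every time t ≥ 1
  have hsum : ∀ t, 1 ≤ t → ∑ k, s t k = 1 := by
    intro t ht
    induction t with
    | zero => omega
    | succ n ih =>
      rcases Nat.lt_or_ge n 1 with h | h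
      · have hn : n = 0 := by omega
        subst hn
        simp only [hs1]
        exact hpsum 1 le_rfl
      · have h1 := ih h
        have h2 := hpsum (n + 1) (by omega)
        simp only [hsrec n h, Finset.sum_sub_distrib, Finset.sum_add_distrib, h1, h2,
          Finset.sum_ite_eq, Finset.mem_univ, if_true]
        ring
  -- the winner's score is at least the average, hence nonnegative
  have hwin : ∀ t, 1 ≤ t → 0 ≤ s t (w t) := by
    intro t ht
    have h1 : (1 : ℝ) = ∑ k, s t k := (hsum t ht).symm
    have h2 : ∑ k, s t k ≤ ∑ _k : Fin m, s t (w t) :=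
      Finset.sum_le_sum fun k _ => hw t ht k
    simp only [Finset.sum_const, Finset.card_univ, Fintype.card_fin, nsmul_eq_mul] at h2
    nlinarith
  -- lower bound on scores
  have hlb : ∀ t, 1 ≤ t → ∀ k, (-1 : ℝ) ≤ s t k := by
    intro t ht
    induction t with
    | zero => omega
    | succ n ih =>
      rcases Nat.lt_or_ge n 1 with h | h
      · have hn : n = 0 := by omega
        subst hn
        intro k
        have := hp0 1 k
        rw [hs1]
        linarith
      · intro k
        rw [hsrec n h k]
        have hpk := hp0 (n + 1) k
        by_cases hwk : w n = k
        · have : 0 ≤ s n k := hwk ▸ hwin n h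
          simp only [hwk, if_true]
          linarith
        · have := ih h k
          simp only [hwk, if_false]
          linarith
  -- upper bound on scores
  have hub : ∀ t, 1 ≤ t → ∀ k, s t k ≤ 1 + m := by
    intro t ht k
    have h1 : s t k + ∑ l ∈ Finset.univ.erase k, s t l = 1 := by
      rw [Finset.add_sum_erase _ _ (Finset.mem_univ k)]
      exact hsum t ht
    have h2 : ∑ l ∈ Finset.univ.erase k, (-1 : ℝ) ≤ ∑ l ∈ Finset.univ.erase k, s t l :=
      Finset.sum_le_sum fun l _ => hlb t ht l
    have h3 : ((Finset.univ.erase k).card : ℝ) ≤ m := by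
      have : (Finset.univ.erase k).card ≤ m := by
        calc (Finset.univ.erase k).card ≤ (Finset.univ : Finset (Fin m)).card :=
              Finset.card_le_card (Finset.erase_subset _ _)
          _ = m := by simp
      exact_mod_cast this
    rw [Finset.sum_const, nsmul_eq_mul] at h2
    nlinarith
  -- key identity
  have hid : ∀ t, 1 ≤ t →
      ∀ j, ((((Finset.Icc 1 t).filter (fun u => w u = j)).card : ℝ)) =
        (∑ u ∈ Finset.Icc 1 (t + 1), p u j) - s (t + 1) j := by
    intro t ht
    induction t with
    | zero => omega
    | succ n ih =>
      intro j
      have hinsert : Finset.Icc 1 (n + 1 + 1) = insert (n + 1 + 1) (Finset.Icc 1 (n + 1)) :=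
        (Finset.insert_Icc_right_eq_Icc_add_one (by omega)).symm
      rcases Nat.lt_or_ge n 1 with h | h
      · have hn : n = 0 := by omega
        subst hn
        have h12 : Finset.Icc 1 2 = {1, 2} := rfl
        have h11 : Finset.Icc 1 1 = {1} := rfl
        rw [h11, h12]
        have hrec := hsrec 1 le_rfl j
        rw [hrec, hs1 j]
        by_cases hwj : w 1 = j <;>
          simp [Finset.filter_singleton, hwj, Finset.sum_pair (by omega : (1:ℕ) ≠ 2)] <;> ring
      · have hI := ih h j
        have hinsert' : Finset.Icc 1 (n + 1) = insert (n + 1) (Finset.Icc 1 n) :=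
          (Finset.insert_Icc_right_eq_Icc_add_one (by omega)).symm
        have hnot : (n + 1) ∉ Finset.Icc 1 n := by simp
        have hrec := hsrec (n + 1) (by omega) j
        rw [hinsert', Finset.filter_insert]
        rw [hinsert, Finset.sum_insert (by simp), hrec]
        by_cases hwj : w (n + 1) = j
        · rw [if_pos hwj]
          rw [Finset.card_insert_of_notMem (fun hmem => hnot (Finset.mem_of_mem_filter _ hmem))]
          push_cast
          rw [hI]
          simp [hwj]
          ring
        · rw [if_neg hwj, hI]
          simp [hwj]
          ring
  intro j
  -- the error term tends to zero
  have herr : Tendsto (fun t : ℕ => (p (t + 1) j - s (t + 1) j) / t) atTop (nhds 0) := by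
    apply squeeze_zero_norm' (a := fun t : ℕ => (2 + m) / t)
    · filter_upwards [eventually_ge_atTop 1] with t ht
      have hub' := hub (t + 1) (by omega) j
      have hlb' := hlb (t + 1) (by omega) j
      have hp' := hp0 (t + 1) j
      have hp1 : p (t + 1) j ≤ 1 := by
        have := hpsum (t + 1) (by omega)
        calc p (t + 1) j ≤ ∑ k, p (t + 1) k :=
              Finset.single_le_sum (fun k _ => hp0 (t + 1) k) (Finset.mem_univ j)
          _ = 1 := this
      have htpos : (0 : ℝ) < t := by exact_mod_cast ht
      rw [Real.norm_eq_abs, abs_div, abs_of_pos htpos]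
      rw [div_le_div_iff_of_pos_right htpos, abs_le]
      constructor <;> linarith
    · exact tendsto_const_div_atTop_nhds_zero_nat (2 + (m : ℝ))
  have hg : Tendsto (fun t : ℕ => (∑ u ∈ Finset.Icc 1 t, p u j) / t
      + (p (t + 1) j - s (t + 1) j) / t) atTop (nhds (pstar j)) := by
    have := (hcesaro j).add herr
    simpa using this
  refine Tendsto.congr' ?_ hg
  filter_upwards [eventually_ge_atTop 1] with t ht
  have htne : (t : ℝ) ≠ 0 := by
    have : (0:ℝ) < t := by exact_mod_cast ht
    linarith
  have hins : Finset.Icc 1 (t + 1) = insert (t + 1) (Finset.Icc 1 t) :=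
    (Finset.insert_Icc_right_eq_Icc_add_one (by omega)).symm
  rw [hid t ht j, hins, Finset.sum_insert (by simp)]
  field_simp
  ring
end

section
/- Consider Frege's original method with two candidates a, b where at time t there are n_t = 3·2^{t-1} voters with plurality scores π_a^t = 2^t and π_b^t = 2^{t-1}. Then σ_a^t > σ_b^t for all t ≥ 1; in particular candidate b is never elected. -/
/-- Frege's original method with doubling electorate: candidate a always beats b,
so b is never elected. -/
theorem frege_exponential_electorate (sa sb : ℕ → ℤ)
    (ha1 : sa 1 = 2) (hb1 : sb 1 = 1)
    (hrec : ∀ t, 1 ≤ t →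
      ((sb t ≤ sa t →
          sa (t + 1) = sa t + 2 ^ (t + 1) - Int.fdiv (sa t + sb t) 2 ∧
          sb (t + 1) = sb t + 2 ^ t) ∧
        (sa t < sb t →
          sa (t + 1) = sa t + 2 ^ (t + 1) ∧
          sb (t + 1) = sb t + 2 ^ t - Int.fdiv (sa t + sb t) 2))) :
    ∀ t, 1 ≤ t → sb t < sa t := by
  have key : ∀ t, 1 ≤ t → sb t = 2 ^ t - 1 ∧ sb t < sa t := by
    intro t ht
    induction t with
    | zero => omega
    | succ n ih =>
      rcases Nat.lt_or_ge 1 (n + 1) with h | h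
      · have hn : 1 ≤ n := by omega
        obtain ⟨hb, hlt⟩ := ih hn
        obtain ⟨h1, h2⟩ := (hrec n hn).1 (le_of_lt hlt)
        have hf : Int.fdiv (sa n + sb n) 2 = (sa n + sb n) / 2 :=
          Int.fdiv_eq_ediv_of_nonneg _ (by norm_num)
        rw [hf] at h1
        have hp : (1 : ℤ) ≤ 2 ^ n := one_le_pow₀ one_le_two
        simp only [pow_succ] at h1 h2 ⊢
        generalize (2 : ℤ) ^ n = p at *
        omega
      · have hn : n = 0 := by omega
        subst hn
        norm_num [ha1, hb1]
  intro t ht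
  exact (key t ht).2
end

section
/- For Frege's original method with a fixed electorate of n voters and m ≥ 2 candidates with fixed plurality scores π_j (Σ_j π_j = n), for every candidate j: lim_{t→∞} ρ_j(t)/t = π_j/n, where ρ_j(t) is the number of times j was chosen as representative up to time t. -/
open Finset Filter

/-- Frege's original method with a fixed electorate: the fraction of wins of
each candidate converges to its proportional share π_j / n. -/
theorem frege_asymptotic_proportionality (m n : ℕ) (hm : 2 ≤ m) (hn : 1 ≤ n)
    (π : Fin m → ℕ) (hπ : ∑ j, π j = n)
    (σ : ℕ → Fin m → ℤ) (w : ℕ → Fin m)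
    (hσ1 : ∀ j, σ 1 j = π j)
    (hrec : ∀ t, 1 ≤ t → ∀ j,
      σ (t + 1) j = σ t j + π j -
        (if w t = j then Int.fdiv (∑ k, σ t k) m else 0))
    (hw : ∀ t, 1 ≤ t → ∀ j, σ t j ≤ σ t (w t)) :
    ∀ j, Tendsto
      (fun t => (((Finset.Icc 1 t).filter (fun u => w u = j)).card : ℝ) / t)
      atTop (nhds ((π j : ℝ) / n)) := by
  intro j
  have hm0 : (0:ℤ) < m := by exact_mod_cast (by omega : 0 < m)
  have hm2 : (2:ℤ) ≤ m := by exact_mod_cast hm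
  have hn1 : (1:ℤ) ≤ n := by exact_mod_cast hn
  set S : ℕ → ℤ := fun t => ∑ k, σ t k with hSdef
  have hπn : (∑ k, (π k : ℤ)) = (n : ℤ) := by exact_mod_cast congrArg (Nat.cast : ℕ → ℤ) hπ
  have hS1 : S 1 = n := by
    simp only [hSdef, hσ1]; exact hπn
  have hSrec : ∀ t, 1 ≤ t → S (t+1) = S t + n - (S t) / m := by
    intro t ht
    have h1 : S (t+1) = ∑ k, (σ t k + (π k : ℤ) - if w t = k then (S t).fdiv m else 0) := by
      simp only [hSdef]
      exact Finset.sum_congr rfl fun k _ => hrec t ht k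
    rw [h1, Finset.sum_sub_distrib, Finset.sum_add_distrib, hπn,
      Finset.sum_ite_eq, Int.fdiv_eq_ediv_of_nonneg _ hm0.le]
    simp [hSdef]
  have hwin : ∀ t, 1 ≤ t → S t / m ≤ σ t (w t) := by
    intro t ht
    have h1 : S t ≤ (m : ℤ) * σ t (w t) := by
      calc S t = ∑ k, σ t k := rfl
        _ ≤ ∑ _k : Fin m, σ t (w t) := Finset.sum_le_sum fun k _ => hw t ht k
        _ = (m : ℤ) * σ t (w t) := by
            rw [Finset.sum_const, Finset.card_univ, Fintype.card_fin, nsmul_eq_mul]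
    calc S t / m ≤ ((m : ℤ) * σ t (w t)) / m := Int.ediv_le_ediv hm0 h1
      _ = σ t (w t) := Int.mul_ediv_cancel_left _ (ne_of_gt hm0)
  have hpos : ∀ t, 1 ≤ t → ∀ k, 0 ≤ σ t k := by
    intro t ht
    induction t, ht using Nat.le_induction with
    | base => intro k; rw [hσ1]; exact Int.natCast_nonneg _
    | succ t ht ih =>
      intro k
      rw [hrec t ht k]
      by_cases hc : w t = k
      · rw [if_pos hc, Int.fdiv_eq_ediv_of_nonneg _ hm0.le]
        have h2 : S t / m ≤ σ t k := hc ▸ hwin t ht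
        have h3 : (0:ℤ) ≤ π k := Int.natCast_nonneg _
        have : S t / m = (∑ k, σ t k) / m := rfl
        rw [← this]
        linarith
      · rw [if_neg hc]
        have := ih k
        have h3 : (0:ℤ) ≤ π k := Int.natCast_nonneg _
        linarith
  have hSnn : ∀ t, 1 ≤ t → 0 ≤ S t := fun t ht => Finset.sum_nonneg fun k _ => hpos t ht k
  have hSub : ∀ t, 1 ≤ t → S t ≤ (n:ℤ) * m := by
    intro t ht
    induction t, ht using Nat.le_induction with
    | base => rw [hS1]; nlinarith
    | succ t ht ih =>
      rw [hSrec t ht]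
      by_cases hc : S t + (n:ℤ) - (n:ℤ)*m ≤ 0
      · have := Int.ediv_nonneg (hSnn t ht) hm0.le
        linarith
      · push_neg at hc
        have key : (S t + (n:ℤ) - (n:ℤ)*m) * m ≤ S t := by
          nlinarith [mul_nonneg (by linarith : (0:ℤ) ≤ (n:ℤ)*m - S t)
            (by linarith : (0:ℤ) ≤ (m:ℤ) - 1)]
        have := (Int.le_ediv_iff_mul_le hm0).mpr key
        linarith
  have hSmin : ∀ t : ℕ, 1 ≤ t → min ((n:ℤ)*m) ((n:ℤ) + (t:ℤ) - 1) ≤ S t := by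
    intro t ht
    induction t, ht using Nat.le_induction with
    | base =>
      rw [hS1]
      have := min_le_right ((n:ℤ)*m) ((n:ℤ) + (1:ℕ) - 1)
      push_cast at this ⊢
      linarith
    | succ t ht ih =>
      rw [hSrec t ht]
      rcases le_or_gt ((n:ℤ)*m) (S t) with h | h
      · have hEq : S t = (n:ℤ)*m := le_antisymm (hSub t ht) h
        have hdiv : S t / m = n := by
          rw [hEq, Int.mul_ediv_cancel _ (ne_of_gt hm0)]
        rw [hdiv, hEq]
        have := min_le_left ((n:ℤ)*m) ((n:ℤ) + ((t:ℤ)+1) - 1)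
        push_cast
        linarith
      · have hdiv : S t / m < n := (Int.ediv_lt_iff_lt_mul hm0).mpr (by linarith)
        have hdiv' : S t / m + 1 ≤ n := Int.lt_iff_add_one_le.mp hdiv
        rcases le_total ((n:ℤ)*m) ((n:ℤ) + t - 1) with hc | hc
        · have : (n:ℤ)*m ≤ S t := by rwa [min_eq_left hc] at ih
          linarith
        · have h4 : (n:ℤ) + t - 1 ≤ S t := by rwa [min_eq_right hc] at ih
          have h3 := min_le_right ((n:ℤ)*m) ((n:ℤ) + ((t:ℤ)+1) - 1)
          push_cast
          linarith
  set T : ℕ := n*m + 1 with hTdef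
  have hT1 : 1 ≤ T := by omega
  have hstab : ∀ t, T ≤ t → S t = (n:ℤ)*m := by
    intro t htt
    have ht1 : 1 ≤ t := le_trans hT1 htt
    have h1 := hSmin t ht1
    have h2 := hSub t ht1
    have h3 : (n:ℤ)*m ≤ (n:ℤ) + t - 1 := by
      have h4 : (T:ℤ) ≤ t := by exact_mod_cast htt
      push_cast [hTdef] at h4
      linarith
    rw [min_eq_left h3] at h1
    exact le_antisymm h2 h1
  set ρ : ℕ → ℕ := fun t => ((Finset.Icc 1 t).filter (fun u => w u = j)).card with hρdef
  have hρsucc : ∀ t : ℕ, ρ (t+1) = ρ t + (if w (t+1) = j then 1 else 0) := by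
    intro t
    have h1 : Finset.Icc 1 (t+1) = insert (t+1) (Finset.Icc 1 t) :=
      (Finset.insert_Icc_right_eq_Icc_add_one (by omega)).symm
    simp only [hρdef, h1, Finset.filter_insert]
    by_cases hc : w (t+1) = j
    · rw [if_pos hc, if_pos hc,
        Finset.card_insert_of_notMem (by simp [Finset.mem_filter, Finset.mem_Icc])]
    · rw [if_neg hc, if_neg hc, add_zero]
  have gkey : ∀ t, T ≤ t →
      (n:ℤ) * ρ t - t * π j + σ (t+1) j = (n:ℤ) * ρ T - T * π j + σ (T+1) j := by
    intro t htt
    induction t, htt using Nat.le_induction with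
    | base => rfl
    | succ t htt ih =>
      have ht1 : 1 ≤ t + 1 := by omega
      have hrec' := hrec (t+1) ht1 j
      have hfix : Int.fdiv (∑ k, σ (t+1) k) m = n := by
        have hs : (∑ k, σ (t+1) k) = (n:ℤ)*m := hstab (t+1) (by omega)
        rw [hs, Int.fdiv_eq_ediv_of_nonneg _ hm0.le, Int.mul_ediv_cancel _ (ne_of_gt hm0)]
      rw [hfix] at hrec'
      by_cases hc : w (t+1) = j
      · have h2 : ρ (t+1) = ρ t + 1 := by rw [hρsucc t, if_pos hc]
        rw [h2, hrec', if_pos hc]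
        push_cast
        push_cast at ih
        linarith
      · have h2 : ρ (t+1) = ρ t := by rw [hρsucc t, if_neg hc, add_zero]
        rw [h2, hrec', if_neg hc]
        push_cast
        push_cast at ih
        linarith
  have hσub : ∀ t, 1 ≤ t → σ t j ≤ (n:ℤ)*m := fun t ht =>
    le_trans (Finset.single_le_sum (f := σ t) (fun k _ => hpos t ht k) (Finset.mem_univ j))
      (hSub t ht)
  set C : ℤ := (n:ℤ) * ρ T - T * π j + σ (T+1) j with hCdef
  have hnR : (0:ℝ) < n := by exact_mod_cast (by omega : 0 < n)
  have hEq : ∀ t : ℕ, T ≤ t →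
      ((ρ t : ℝ))/t = (π j:ℝ)/n + ((C:ℝ) - (σ (t+1) j : ℝ))/((n:ℝ)*t) := by
    intro t htt
    have ht1 : 1 ≤ t := le_trans hT1 htt
    have ht0 : (0:ℝ) < t := by exact_mod_cast (by omega : 0 < t)
    have h1 : (n:ℤ) * ρ t = t * π j - σ (t+1) j + C := by
      have := gkey t htt
      linarith
    have h1R : (n:ℝ) * ρ t = (t:ℝ) * π j - (σ (t+1) j : ℝ) + (C:ℝ) := by exact_mod_cast h1
    field_simp
    linear_combination h1R
  have hlim0 : Tendsto (fun t : ℕ => ((C:ℝ) - (σ (t+1) j : ℝ))/((n:ℝ)*t)) atTop (nhds 0) := by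
    apply squeeze_zero_norm' (a := fun t : ℕ => ((|(C:ℝ)| + (n:ℝ)*m)/n) / t)
    · filter_upwards [eventually_ge_atTop 1] with t ht
      have ht0 : (0:ℝ) < t := by exact_mod_cast (by omega : 0 < t)
      have hnum : |(C:ℝ) - (σ (t+1) j : ℝ)| ≤ |(C:ℝ)| + (n:ℝ)*m := by
        have h0 : (0:ℤ) ≤ σ (t+1) j := hpos (t+1) (by omega) j
        have h1 : σ (t+1) j ≤ (n:ℤ)*m := hσub (t+1) (by omega)
        have h0R : (0:ℝ) ≤ (σ (t+1) j : ℝ) := by exact_mod_cast h0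
        have h1R : (σ (t+1) j : ℝ) ≤ (n:ℝ)*m := by exact_mod_cast h1
        calc |(C:ℝ) - (σ (t+1) j : ℝ)| ≤ |(C:ℝ)| + |(σ (t+1) j : ℝ)| := abs_sub _ _
          _ ≤ |(C:ℝ)| + (n:ℝ)*m := by rw [abs_of_nonneg h0R]; linarith
      have heq1 : ((|(C:ℝ)| + (n:ℝ)*m)/n) / t = (|(C:ℝ)| + (n:ℝ)*m) / ((n:ℝ)*t) := by
        rw [div_div]
      rw [heq1, Real.norm_eq_abs, abs_div, abs_of_pos (by positivity : (0:ℝ) < (n:ℝ)*t)]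
      exact div_le_div_of_nonneg_right hnum (by positivity) |>.trans_eq rfl
    · exact tendsto_const_div_atTop_nhds_zero_nat _
  have hfinal : Tendsto (fun t : ℕ => ((ρ t : ℝ))/t) atTop (nhds ((π j:ℝ)/n)) := by
    have h2 : Tendsto (fun t : ℕ => (π j:ℝ)/n + ((C:ℝ) - (σ (t+1) j : ℝ))/((n:ℝ)*t))
        atTop (nhds ((π j:ℝ)/n)) := by
      simpa using tendsto_const_nhds.add hlim0
    exact h2.congr' (by filter_upwards [eventually_ge_atTop T] with t ht using (hEq t ht).symm)
  exact hfinal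
end

section
/- For Frege's original method with a fixed number n of voters per round (plurality scores may vary), there exist t₀ ≥ 1 and for each candidate j a constant c_j ≥ 0 such that for all t ≥ t₀: σ_j^{t+1} = Σ_{s=1}^{t+1} π_j^s - c_j - n·(ρ_j(t) - ρ_j(t₀)). -/
/-!
Summing the recursion over all candidates, the total score evolves by
`x ↦ x + n - ⌊x / m⌋`. This map keeps `[0, n m]` invariant, fixes `n m`, and strictly increases
every other point of that interval, so the total reaches `n m` after at most `n m` rounds and
stays there. From then on the winner loses exactly `n` points per round, and the claimed formula
is the telescoped recursion, with `c_j` the points `j` has lost up to round `t₀ + 1`.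
-/

open Finset

namespace Frege

def totalStep (m n : ℕ) (x : ℤ) : ℤ := x + n - x / m

variable {m n : ℕ}

lemma totalStep_mem_Icc (hm : 0 < m) {x : ℤ} (hx : x ∈ Icc (0 : ℤ) (n * m)) :
    totalStep m n x ∈ Icc (0 : ℤ) (n * m) := by
  obtain ⟨hx0, hxnm⟩ := Finset.mem_Icc.1 hx
  have hm' : (0 : ℤ) < m := by exact_mod_cast hm
  have hq0 : 0 ≤ x / m := Int.ediv_nonneg hx0 hm'.le
  have hqx : x / m ≤ x := Int.ediv_le_self _ hx0
  have hqn : x / m ≤ n := by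
    simpa [Int.mul_ediv_cancel _ hm'.ne'] using Int.ediv_le_ediv hm' hxnm
  have hdiv : (m : ℤ) * (x / m) + x % m = x := Int.mul_ediv_add_emod _ _
  have hr0 : 0 ≤ x % m := Int.emod_nonneg _ hm'.ne'
  have hrm : x % m < m := Int.emod_lt_of_pos _ hm'
  refine Finset.mem_Icc.2 ⟨by unfold totalStep; linarith, ?_⟩
  unfold totalStep
  nlinarith

lemma lt_totalStep (hm : 0 < m) {x : ℤ} (hx : x < n * m) : x < totalStep m n x := by
  have : x / m < n := Int.ediv_lt_of_lt_mul (by exact_mod_cast hm) hx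
  unfold totalStep
  linarith

lemma totalStep_mul (hm : 0 < m) : totalStep m n (n * m) = n * m := by
  simp [totalStep, Int.mul_ediv_cancel _ (by exact_mod_cast hm.ne' : (m : ℤ) ≠ 0)]

lemma totalStep_orbit_mem_Icc (hm : 0 < m) {S : ℕ → ℤ} (hS1 : S 1 ∈ Icc (0 : ℤ) (n * m))
    (hS : ∀ t, 1 ≤ t → S (t + 1) = totalStep m n (S t)) :
    ∀ t, 1 ≤ t → S t ∈ Icc (0 : ℤ) (n * m) := by
  intro t ht
  induction t, ht using Nat.le_induction with
  | base => exact hS1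
  | succ t ht ih => rw [hS t ht]; exact totalStep_mem_Icc hm ih

lemma totalStep_orbit_eq_mul (hm : 0 < m) {S : ℕ → ℤ} (hS1 : S 1 ∈ Icc (0 : ℤ) (n * m))
    (hS : ∀ t, 1 ≤ t → S (t + 1) = totalStep m n (S t)) :
    ∀ t, n * m + 1 ≤ t → S t = n * m := by
  have hmem := totalStep_orbit_mem_Icc hm hS1 hS
  have hgrow : ∀ k : ℕ, min (S 1 + k) (n * m) ≤ S (k + 1) := by
    intro k
    induction k with
    | zero => simp
    | succ k ih =>
      rw [hS (k + 1) (by omega)]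
      rcases (Finset.mem_Icc.1 (hmem (k + 1) (by omega))).2.lt_or_eq with hlt | heq
      · have := lt_totalStep hm hlt
        push_cast
        omega
      · rw [heq, totalStep_mul hm]
        exact min_le_right _ _
  intro t ht
  induction t, ht using Nat.le_induction with
  | base =>
    have hlow : min (S 1 + n * m) (n * m) ≤ S (n * m + 1) := by exact_mod_cast hgrow (n * m)
    have hS10 := (Finset.mem_Icc.1 hS1).1
    have hup := (Finset.mem_Icc.1 (hmem (n * m + 1) (by omega))).2
    omega
  | succ t ht ih => rw [hS t (by omega), ih, totalStep_mul hm]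

end Frege

lemma natCast_card_filter_Icc_succ (p : ℕ → Prop) [DecidablePred p] (t : ℕ) :
    (#{u ∈ Icc 1 (t + 1) | p u} : ℤ) = #{u ∈ Icc 1 t | p u} + if p (t + 1) then 1 else 0 := by
  simp only [Finset.card_filter, Nat.cast_sum, Nat.cast_ite, Nat.cast_one, Nat.cast_zero]
  exact Finset.sum_Icc_succ_top (by omega) _

lemma le_sum_Icc_of_le_add {a b : ℕ → ℤ} (h1 : a 1 ≤ b 1)
    (h : ∀ t, 1 ≤ t → a (t + 1) ≤ a t + b (t + 1)) :
    ∀ t, 1 ≤ t → a t ≤ ∑ u ∈ Icc 1 t, b u := by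
  intro t ht
  induction t, ht using Nat.le_induction with
  | base => simpa using h1
  | succ t ht ih =>
    rw [Finset.sum_Icc_succ_top (by omega)]
    linarith [h t ht]

lemma eq_sum_Icc_sub_of_eq_add_sub {a b : ℕ → ℤ} {p : ℕ → Prop} [DecidablePred p] {t₀ : ℕ}
    (d : ℤ) (h : ∀ t, t₀ ≤ t → a (t + 1) = a t + b (t + 1) - if p t then d else 0) :
    ∀ t, t₀ ≤ t → a (t + 1) =
      (∑ u ∈ Icc 1 (t + 1), b u) - (∑ u ∈ Icc 1 (t₀ + 1), b u - a (t₀ + 1)) -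
        d * ((#{u ∈ Icc 1 t | p u} : ℤ) - #{u ∈ Icc 1 t₀ | p u}) := by
  intro t ht
  induction t, ht using Nat.le_induction with
  | base => ring
  | succ t ht ih =>
    rw [h (t + 1) (by omega), ih, Finset.sum_Icc_succ_top (by omega : 1 ≤ t + 1 + 1),
      natCast_card_filter_Icc_succ]
    split_ifs <;> ring

theorem frege_score_identity_after_stabilization_general (m n : ℕ)
    (π : ℕ → Fin m → ℕ) (hπ : ∀ t, 1 ≤ t → ∑ j, π t j = n)
    (σ : ℕ → Fin m → ℤ) (w : ℕ → Fin m)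
    (hσ1 : ∀ j, σ 1 j = π 1 j)
    (hrec : ∀ t, 1 ≤ t → ∀ j,
      σ (t + 1) j = σ t j + π (t + 1) j -
        (if w t = j then Int.fdiv (∑ k, σ t k) m else 0)) :
    ∃ t₀ : ℕ, 1 ≤ t₀ ∧ ∀ j, ∃ c : ℤ, 0 ≤ c ∧
      ∀ t, t₀ ≤ t →
        σ (t + 1) j =
          (∑ u ∈ Finset.Icc 1 (t + 1), (π u j : ℤ)) - c -
            n * ((((Finset.Icc 1 t).filter (fun u => w u = j)).card : ℤ) -
              (((Finset.Icc 1 t₀).filter (fun u => w u = j)).card : ℤ)) := by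
  refine ⟨n * m + 1, by omega, fun j => ?_⟩
  have hm : 0 < m := j.pos
  simp only [Int.fdiv_eq_ediv_of_nonneg _ (Int.natCast_nonneg m)] at hrec
  have hπZ : ∀ t, 1 ≤ t → ∑ k, (π t k : ℤ) = n := fun t ht => by exact_mod_cast hπ t ht
  set S : ℕ → ℤ := fun t => ∑ k, σ t k
  have hS1 : S 1 ∈ Icc (0 : ℤ) (n * m) := by
    simp only [S, hσ1, hπZ 1 le_rfl, Finset.mem_Icc]
    exact ⟨by positivity, by nlinarith⟩
  have hS : ∀ t, 1 ≤ t → S (t + 1) = Frege.totalStep m n (S t) := fun t ht => by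
    simp only [S, hrec t ht, Finset.sum_sub_distrib, Finset.sum_add_distrib, Finset.sum_ite_eq,
      Finset.mem_univ, if_true, hπZ (t + 1) (by omega), Frege.totalStep]
  have hσle : ∀ t, 1 ≤ t → σ t j ≤ ∑ u ∈ Icc 1 t, (π u j : ℤ) := by
    refine le_sum_Icc_of_le_add (hσ1 j).le fun t ht => ?_
    have : 0 ≤ S t / m := Int.ediv_nonneg
      (Finset.mem_Icc.1 (Frege.totalStep_orbit_mem_Icc hm hS1 hS t ht)).1 (Int.natCast_nonneg m)
    rw [hrec t ht j]
    split_ifs <;> linarith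
  refine ⟨_, sub_nonneg.2 (hσle (n * m + 1 + 1) (by omega)),
    eq_sum_Icc_sub_of_eq_add_sub (a := (σ · j)) (b := (π · j)) (p := (w · = j)) n fun t ht => ?_⟩
  rw [hrec t (by omega) j, show ∑ k, σ t k = n * m from Frege.totalStep_orbit_eq_mul hm hS1 hS t ht,
    Int.mul_ediv_cancel _ (by exact_mod_cast hm.ne' : (m : ℤ) ≠ 0)]

/-- Frege's original method with a fixed number of voters: after the total score
stabilizes, each aggregate score equals cumulative votes minus an offset minus
n times the number of wins since stabilization. -/
theorem frege_score_identity_after_stabilization (m n : ℕ) (hm : 2 ≤ m) (hn : 1 ≤ n)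
    (π : ℕ → Fin m → ℕ) (hπ : ∀ t, 1 ≤ t → ∑ j, π t j = n)
    (σ : ℕ → Fin m → ℤ) (w : ℕ → Fin m)
    (hσ1 : ∀ j, σ 1 j = π 1 j)
    (hrec : ∀ t, 1 ≤ t → ∀ j,
      σ (t + 1) j = σ t j + π (t + 1) j -
        (if w t = j then Int.fdiv (∑ k, σ t k) m else 0))
    (hw : ∀ t, 1 ≤ t → ∀ j, σ t j ≤ σ t (w t)) :
    ∃ t₀ : ℕ, 1 ≤ t₀ ∧ ∀ j, ∃ c : ℤ, 0 ≤ c ∧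
      ∀ t, t₀ ≤ t →
        σ (t + 1) j =
          (∑ u ∈ Finset.Icc 1 (t + 1), (π u j : ℤ)) - c -
            n * ((((Finset.Icc 1 t).filter (fun u => w u = j)).card : ℤ) -
              (((Finset.Icc 1 t₀).filter (fun u => w u = j)).card : ℤ)) :=
  frege_score_identity_after_stabilization_general m n π hπ σ w hσ1 hrec
end

section
/- In the modified Frege method with m candidates where at round t ∈ {1,...,m} the normalized plurality scores are p_j^t = 0 for j < t and p_j^t = 1/(m-t+1) for j ≥ t, and ties are broken in favor of the smaller-indexed candidate, candidate t is elected in round t for each t ∈ {1,...,m}. Consequently, at time t = m-1 candidate m has r_m(m-1) = 0 while Σ_{s=1}^{m-1} p_m^s = Σ_{i=2}^m 1/i. -/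
/-!
Before round t, candidates t-1, t, …, m-1 (0-indexed) have received exactly the same votes
and have never won, while each earlier candidate has won once and is strictly behind. Hence
candidate t-1 is the lexicographic winner of round t. The winner then drops by 1 while the
others still in the race gain 1/(m-t), a non-negative amount, so the same picture holds with
t+1 in place of t. The last candidate therefore never wins before round m, although its
accumulated share is 1/m + 1/(m-1) + ⋯ + 1/2.
-/

open Finset

section

variable {ι α : Type*} [LinearOrder ι] [LinearOrder α]

def IsLexWinner (s : ι → α) (a : ι) : Prop :=
  ∀ j, s j < s a ∨ (s j = s a ∧ a ≤ j)

def IsTopFrom (s : ι → α) (a : ι) : Prop :=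
  ∀ j, (a ≤ j → s j = s a) ∧ (j < a → s j < s a)

theorem IsLexWinner.unique {s : ι → α} {a b : ι} (ha : IsLexWinner s a)
    (hb : IsLexWinner s b) : a = b := by
  rcases ha b with hba | ⟨hba, hab⟩ <;> rcases hb a with hab' | ⟨hab', hba'⟩
  · exact absurd hba hab'.not_gt
  · exact absurd hba hab'.not_gt
  · exact absurd hab' hba.not_gt
  · exact le_antisymm hab hba'

theorem IsTopFrom.isLexWinner {s : ι → α} {a : ι} (h : IsTopFrom s a) : IsLexWinner s a := by
  intro j
  rcases le_or_gt a j with haj | hja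
  · exact .inr ⟨(h j).1 haj, haj⟩
  · exact .inl ((h j).2 hja)

theorem IsTopFrom.update {s : ι → ℝ} {a a' : ι} {c : ℝ} (h : IsTopFrom s a) (hcov : a ⋖ a')
    (hc : 0 ≤ c) :
    IsTopFrom (fun j => s j + (if j < a' then 0 else c) - if a = j then 1 else 0) a' := by
  have ha' : s a' + (if a' < a' then 0 else c) - (if a = a' then 1 else 0) = s a + c := by
    rw [if_neg (lt_irrefl a'), if_neg hcov.lt.ne, (h a').1 hcov.lt.le, sub_zero]
  intro j
  simp only [ha']
  constructor
  · intro haj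
    rw [if_neg haj.not_gt, if_neg (hcov.lt.trans_le haj).ne, (h j).1 (hcov.lt.le.trans haj),
      sub_zero]
  · intro hja
    rw [if_pos hja, add_zero]
    rcases (hcov.le_of_lt hja).lt_or_eq with hja | rfl
    · rw [if_neg hja.ne']
      linarith [(h j).2 hja]
    · rw [if_pos rfl]
      linarith

theorem sum_Icc_one_div_reflect (m : ℕ) :
    ∑ u ∈ Icc 1 (m - 1), 1 / ((m : ℝ) - u + 1) = ∑ i ∈ Icc 2 m, 1 / (i : ℝ) := by
  refine sum_nbij' (fun u => m + 1 - u) (fun i => m + 1 - i) ?_ ?_ ?_ ?_ ?_ <;>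
    intro u hu <;> simp only [mem_Icc] at hu ⊢
  · omega
  · omega
  · omega
  · omega
  · rw [Nat.cast_sub (by omega), Nat.cast_add_one]
    ring_nf

end

/-- Modified Frege with the harmonic electorate: with lexicographic tie-breaking,
candidate t wins round t; consequently the last candidate has no wins by time
m-1 while its cumulative vote share is the harmonic sum Σ_{i=2}^m 1/i. -/
theorem modified_frege_unbounded_lower_quota_violation (m : ℕ) (hm : 2 ≤ m)
    (p s : ℕ → Fin m → ℝ) (w : ℕ → Fin m)
    (hp : ∀ t, 1 ≤ t → t ≤ m → ∀ j : Fin m,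
      p t j = if (j : ℕ) + 1 < t then 0 else 1 / ((m : ℝ) - t + 1))
    (hs1 : ∀ j, s 1 j = p 1 j)
    (hsrec : ∀ t, 1 ≤ t → t + 1 ≤ m → ∀ j,
      s (t + 1) j = s t j + p (t + 1) j - (if w t = j then 1 else 0))
    (hw : ∀ t, 1 ≤ t → t ≤ m → ∀ j : Fin m,
      s t j < s t (w t) ∨ (s t j = s t (w t) ∧ w t ≤ j)) :
    (∀ t, 1 ≤ t → t ≤ m → (w t : ℕ) = t - 1) ∧
      (((Finset.Icc 1 (m - 1)).filter
          (fun u => w u = (⟨m - 1, by omega⟩ : Fin m))).card = 0) ∧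
      (∑ u ∈ Finset.Icc 1 (m - 1), p u (⟨m - 1, by omega⟩ : Fin m)) =
        ∑ i ∈ Finset.Icc 2 m, 1 / (i : ℝ) := by
  have htop : ∀ k (hk : k < m), IsTopFrom (s (k + 1)) ⟨k, hk⟩ := by
    intro k
    induction k with
    | zero =>
      intro hk j
      simp [hs1, hp 1 le_rfl hk, Fin.lt_def]
    | succ k ih =>
      intro hk
      have hwin : w (k + 1) = ⟨k, by omega⟩ :=
        ((ih _).isLexWinner.unique (hw (k + 1) (by omega) (by omega))).symm
      have hround : s (k + 2) = fun j =>
          s (k + 1) j + (if j < ⟨k + 1, hk⟩ then 0 else 1 / ((m : ℝ) - (k + 2) + 1)) -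
            if (⟨k, by omega⟩ : Fin m) = j then 1 else 0 := by
        ext j
        rw [hsrec (k + 1) (by omega) hk, hp (k + 2) (by omega) hk, hwin]
        simp [Fin.lt_def]
      rw [hround]
      exact (ih _).update (by simp [Fin.covBy_iff]) (by
        have : (k : ℝ) + 2 ≤ m := by exact_mod_cast hk
        positivity)
  have hwin : ∀ t, 1 ≤ t → t ≤ m → (w t : ℕ) = t - 1 := by
    intro t ht1 htm
    obtain ⟨k, rfl⟩ : ∃ k, t = k + 1 := ⟨t - 1, by omega⟩
    rw [← (htop k (by omega)).isLexWinner.unique (hw (k + 1) ht1 htm)]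
    rfl
  refine ⟨hwin, ?_, ?_⟩
  · refine card_eq_zero.mpr (filter_eq_empty_iff.mpr fun u hu hlast => ?_)
    rw [mem_Icc] at hu
    have := hwin u hu.1 (by omega)
    rw [hlast] at this
    simp only at this
    omega
  · rw [← sum_Icc_one_div_reflect m]
    refine sum_congr rfl fun u hu => ?_
    rw [mem_Icc] at hu
    rw [hp u hu.1 (by omega), if_neg (by simp only; omega)]
end
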